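/- Let p be a prime and let r_\alpha, r'_\alpha be natural numbers with 0 \le r_\alpha, r'_\alpha \le p-1 indexed by finite sets S and S' respectively, and let v_\alpha (\alpha \in S) and u_\alpha (\alpha \in S') be vectors in \mathbb{R}^n. Suppose \sum_{\alpha \in S} r_\alpha v_\alpha + \sum_{\alpha \in S'} r'_\alpha u_\alpha = (p-1) \sum_{\alpha \in S'} u_\alpha, and suppose there is a linear functional f with f(v_\alpha) < 0 for all \alpha \in S and f(u_\alpha) > 0 for all \alpha \in S'. Then r_\alpha = 0 for all \alpha \in S. -/
import Mathlib


theorem weight_coeff_vanish (p n : ℕ) (hp : p.Prime) (ι : Type*)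
    (S S' : Finset ι) (r r' : ι → ℕ)
    (hr : ∀ a ∈ S, r a ≤ p - 1) (hr' : ∀ a ∈ S', r' a ≤ p - 1)
    (v u : ι → (Fin n → ℝ))
    (hsum : ∑ a ∈ S, (r a : ℝ) • v a + ∑ a ∈ S', (r' a : ℝ) • u a =
      ((p : ℝ) - 1) • ∑ a ∈ S', u a)
    (f : (Fin n → ℝ) →ₗ[ℝ] ℝ)
    (hv : ∀ a ∈ S, f (v a) < 0) (hu : ∀ a ∈ S', 0 < f (u a)) :
    ∀ a ∈ S, r a = 0 := by
  have h := congrArg f hsum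
  simp only [map_add, map_sum, map_smul, smul_eq_mul] at h
  have key : ∑ a ∈ S, (r a : ℝ) * f (v a)
      = ∑ a ∈ S', (((p : ℝ) - 1) - (r' a : ℝ)) * f (u a) := by
    rw [Finset.mul_sum] at h
    simp only [sub_mul, one_mul] at h ⊢
    simp only [Finset.sum_sub_distrib] at h ⊢
    linarith [h]
  have hRHS : 0 ≤ ∑ a ∈ S', (((p : ℝ) - 1) - (r' a : ℝ)) * f (u a) := by
    apply Finset.sum_nonneg
    intro a ha
    apply mul_nonneg _ (le_of_lt (hu a ha))
    have h1 := hr' a ha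
    have hp1 : 1 ≤ p := hp.one_lt.le
    have h2 : (r' a : ℝ) ≤ ((p - 1 : ℕ) : ℝ) := by exact_mod_cast h1
    rw [Nat.cast_sub hp1, Nat.cast_one] at h2
    linarith
  have hle : ∀ a ∈ S, (r a : ℝ) * f (v a) ≤ 0 := fun a ha =>
    mul_nonpos_of_nonneg_of_nonpos (by positivity) (hv a ha).le
  have hsum0 : ∑ a ∈ S, (r a : ℝ) * f (v a) = 0 :=
    le_antisymm (Finset.sum_nonpos hle) (key ▸ hRHS)
  have hzero := (Finset.sum_eq_zero_iff_of_nonpos hle).1 hsum0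
  intro a ha
  rcases mul_eq_zero.1 (hzero a ha) with h1 | h2
  · exact_mod_cast h1
  · exact absurd h2 (hv a ha).ne
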